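/- The shifted Asai L-function 𝓛_{As}(Π, s) = L_{As}(Π, s − (k_1+k_2+2)/2) of a Hilbert cuspidal automorphic representation Π of weight (k_1+2, k_2+2) has critical values exactly the integers s with k_2 + 2 ≤ s ≤ k_1 + 1 when k_1 > k_2 (and symmetrically when k_1 < k_2); there are no critical values when k_1 = k_2. -/
import Mathlib


/-!
STATEMENT 17 (Critical values of the shifted Asai `L`-function).

`F` is a real quadratic field and `Π` the unitary cuspidal automorphic
representation of `(Res_{F/ℚ}GL₂)(𝔸)` generated by a holomorphic Hilbert
modular newform of weight `(k₁+2, k₂+2)`, `k₁, k₂ ≥ 0` (with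
`k₁ ≡ k₂ (mod 2)`).  The shifted Asai `L`-function
`𝓛_{As}(Π, s) = L_{As}(Π, s − (k₁+k₂+2)/2)` has Hodge–Tate (motivic) weights
`{0, −1−k₁, −1−k₂, −2−k₁−k₂}`, and its archimedean `Γ`-factor is (up to
nowhere-vanishing exponential factors):
* `Γ_ℂ(s)·Γ_ℂ(s − min(k₁,k₂) − 1)` when `k₁ ≠ k₂`;
* `Γ_ℂ(s)·Γ_ℝ(s − k − 1)·Γ_ℝ(s − k)` when `k₁ = k₂ = k`, the middle Hodge
  type splitting into a pair of characters of opposite parity.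
Here `Γ_ℂ(s) = 2(2π)^{-s}Γ(s)` and `Γ_ℝ(s) = π^{-s/2}Γ(s/2)`.  An integer
`s` is a *critical value* if neither the `Γ`-factor at `s` nor the
`Γ`-factor on the dual side of the functional equation (which interchanges
`s` and `k₁ + k₂ + 3 − s`) has a pole.  Since Mathlib's `Complex.Gamma`
takes the value `0` exactly at the poles of `Γ` (the nonpositive integers)
and is non-vanishing elsewhere, "the `Γ`-factor has no pole at `s`" is
equivalent to the non-vanishing of the product of `Complex.Gamma`'s below.
-/

open Complex

/-- The product of the `Γ`-function parts of the archimedean factor of the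
shifted Asai `L`-function of a Hilbert cuspidal automorphic representation of
weight `(k₁+2, k₂+2)` (discarding the nowhere-vanishing exponential factors
`2(2π)^{-s}`, `π^{-s/2}`): this complex number is non-zero precisely when
the archimedean `Γ`-factor has no pole at `s`. -/
noncomputable def asaiArchGammaFactor (k₁ k₂ : ℤ) (s : ℤ) : ℂ :=
  if k₁ = k₂ then
    Complex.Gamma (s : ℂ) * Complex.Gamma (((s - k₁ - 1 : ℤ) : ℂ) / 2) *
      Complex.Gamma (((s - k₁ : ℤ) : ℂ) / 2)
  else
    Complex.Gamma (s : ℂ) * Complex.Gamma ((s - min k₁ k₂ - 1 : ℤ) : ℂ)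

/-- An integer `s` is a critical value of the shifted Asai `L`-function
`𝓛_{As}(Π, s)` if neither the archimedean `Γ`-factor at `s` nor that of the
dual side of the functional equation (at `k₁ + k₂ + 3 − s`) has a pole. -/
def IsAsaiCriticalValue (k₁ k₂ : ℤ) (s : ℤ) : Prop :=
  asaiArchGammaFactor k₁ k₂ s ≠ 0 ∧
    asaiArchGammaFactor k₁ k₂ (k₁ + k₂ + 3 - s) ≠ 0

open Complex in
lemma gammaInt_ne (n : ℤ) : Complex.Gamma (n : ℂ) ≠ 0 ↔ 0 < n := by
  rw [Ne, Complex.Gamma_eq_zero_iff]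
  constructor
  · intro h
    by_contra hn
    push_neg at hn
    refine h ⟨(-n).toNat, ?_⟩
    norm_cast
    omega
  · rintro h ⟨m, hm⟩
    have : n = -(m : ℤ) := by exact_mod_cast hm
    omega

open Complex in
lemma gammaHalf_ne (n : ℤ) :
    Complex.Gamma ((n : ℂ) / 2) ≠ 0 ↔ (0 < n ∨ n % 2 = 1) := by
  rw [Ne, Complex.Gamma_eq_zero_iff]
  constructor
  · intro h
    by_contra hn
    push_neg at hn
    obtain ⟨h1, h2⟩ := hn
    refine h ⟨((-n)/2).toNat, ?_⟩
    rw [div_eq_iff (two_ne_zero' ℂ), eq_comm]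
    norm_cast
    omega
  · rintro h ⟨m, hm⟩
    rw [div_eq_iff (two_ne_zero' ℂ), eq_comm] at hm
    have : -(m : ℤ) * 2 = n := by exact_mod_cast hm
    omega

open Complex in
lemma asai_ne_of_ne {k₁ k₂ : ℤ} (h : k₁ ≠ k₂) (s : ℤ) :
    asaiArchGammaFactor k₁ k₂ s ≠ 0 ↔ (0 < s ∧ 0 < s - min k₁ k₂ - 1) := by
  rw [asaiArchGammaFactor, if_neg h, mul_ne_zero_iff, gammaInt_ne, gammaInt_ne]

open Complex in
lemma asai_ne_of_eq (k : ℤ) (s : ℤ) :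
    asaiArchGammaFactor k k s ≠ 0 ↔
      (0 < s ∧ (0 < s - k - 1 ∨ (s - k - 1) % 2 = 1) ∧ (0 < s - k ∨ (s - k) % 2 = 1)) := by
  rw [asaiArchGammaFactor, if_pos rfl, mul_ne_zero_iff, mul_ne_zero_iff,
    gammaInt_ne, gammaHalf_ne, gammaHalf_ne, and_assoc]

/-- **Critical values of the shifted Asai `L`-function**: for
`k₁, k₂ ≥ 0` with `k₁ ≡ k₂ (mod 2)`, the critical values of
`𝓛_{As}(Π, s) = L_{As}(Π, s − (k₁+k₂+2)/2)` are exactly the integers `s`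
with `k₂ + 2 ≤ s ≤ k₁ + 1` when `k₁ > k₂`, symmetrically the integers with
`k₁ + 2 ≤ s ≤ k₂ + 1` when `k₁ < k₂`, and there are no critical values when
`k₁ = k₂`. -/
theorem asai_critical_values (k₁ k₂ : ℤ)
    (hk₁ : 0 ≤ k₁) (hk₂ : 0 ≤ k₂) (hpar : k₁ % 2 = k₂ % 2) :
    (k₂ < k₁ → ∀ s : ℤ, IsAsaiCriticalValue k₁ k₂ s ↔ (k₂ + 2 ≤ s ∧ s ≤ k₁ + 1)) ∧
    (k₁ < k₂ → ∀ s : ℤ, IsAsaiCriticalValue k₁ k₂ s ↔ (k₁ + 2 ≤ s ∧ s ≤ k₂ + 1)) ∧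
    (k₁ = k₂ → ∀ s : ℤ, ¬ IsAsaiCriticalValue k₁ k₂ s) := by
  refine ⟨fun h s => ?_, fun h s => ?_, fun h s => ?_⟩
  · rw [IsAsaiCriticalValue, asai_ne_of_ne (by omega) s, asai_ne_of_ne (by omega)]
    omega
  · rw [IsAsaiCriticalValue, asai_ne_of_ne (by omega) s, asai_ne_of_ne (by omega)]
    omega
  · subst h
    rw [IsAsaiCriticalValue, asai_ne_of_eq, asai_ne_of_eq]
    omega
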